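/- arXiv:2405.07063 — 2 statements merged into one kernel-verified Lean document; each statement's English description precedes it below -/
import Mathlib

section
/- Let N ≥ 2, p > 2, μ > 0, and let U ∈ C³([0,1]) satisfy U'' + ((N-1)/r)U' + μ²|U|^{p-2}U = 0 on (0,1) with U'(0) = U'(1) = 0. Then ∫₀¹ r^{N-1}[ (U''(r))² - μ²(p-1)|U(r)|^{p-2}(U'(r))² ] dr = -(N-1) ∫₀¹ r^{N-3} (U'(r))² dr. -/
/-!
Write `c = N - 1`, `V = U'`, `W = U''`. Differentiating the equation gives
`V'' + (c/r) V' - (c/r²) V + g'(U) V = 0` with `g(u) = μ²|u|^(p-2) u`, and multiplying it by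
`r^c V` turns the left integrand into `(r^c V W)' - c r^(c-2) V²`. The boundary term `r^c V W`
vanishes at `0` because `c > 0` and at `1` because `U'(1) = 0`.
-/

open Real Filter Topology Set

theorem hasDerivAt_abs_rpow_mul_self {q : ℝ} (hq : 0 < q) (x : ℝ) :
    HasDerivAt (fun u : ℝ => |u| ^ q * u) ((q + 1) * |x| ^ q) x := by
  rcases eq_or_ne x 0 with rfl | hx
  · rw [abs_zero, zero_rpow hq.ne', mul_zero, hasDerivAt_iff_tendsto_slope_zero]
    have hlim : Tendsto (fun t : ℝ => |t| ^ q) (𝓝 0) (𝓝 0) := by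
      simpa [zero_rpow hq.ne'] using (continuous_abs.rpow_const fun _ => Or.inr hq.le).tendsto 0
    refine (hlim.mono_left nhdsWithin_le_nhds).congr' ?_
    filter_upwards [self_mem_nhdsWithin] with t (ht : t ≠ 0)
    simp [ht, mul_comm t⁻¹]
  · have hx' : |x| ≠ 0 := abs_ne_zero.mpr hx
    refine (((hasDerivAt_abs hx).rpow_const (p := q) (Or.inl hx')).mul
      (hasDerivAt_id x)).congr_deriv ?_
    rw [rpow_sub_one hx', id]
    trans q * |x| ^ q / |x| * (SignType.sign x * x) + |x| ^ q
    · ring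
    rw [sign_mul_self]
    field_simp

section RadialODE

variable {U g g' : ℝ → ℝ} {c : ℝ}

theorem deriv_radial_ode_eq_zero (hU : ContDiff ℝ 3 U) (hg : ∀ u, HasDerivAt g (g' u) u)
    {r : ℝ} (hr : r ≠ 0)
    (hode : ∀ᶠ x in 𝓝 r, deriv (deriv U) x + c / x * deriv U x + g (U x) = 0) :
    deriv (deriv (deriv U)) r + c / r * deriv (deriv U) r - c / r ^ 2 * deriv U r
      + g' (U r) * deriv U r = 0 := by
  have hU₁ : DifferentiableAt ℝ U r := hU.differentiable (by norm_num) r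
  have hU₂ : DifferentiableAt ℝ (deriv U) r :=
    (hU.deriv' (n := 2)).differentiable (by norm_num) r
  have hU₃ : DifferentiableAt ℝ (deriv (deriv U)) r :=
    ((hU.deriv' (n := 2)).deriv' (n := 1)).differentiable (by norm_num) r
  have hE := (hU₃.hasDerivAt.add (((hasDerivAt_const r c).div (hasDerivAt_id r) hr).mul
    hU₂.hasDerivAt)).add ((hg (U r)).comp r hU₁.hasDerivAt)
  have h := hE.unique ((hasDerivAt_const r (0 : ℝ)).congr_of_eventuallyEq hode)
  simp only [id, Pi.div_apply] at h
  linear_combination h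

theorem integral_rpow_mul_sq_deriv_of_radial_ode (hc : 1 ≤ c) (hU : ContDiff ℝ 3 U)
    (hg : ∀ u, HasDerivAt g (g' u) u) (hg' : Continuous g')
    (hode : ∀ r ∈ Ioo (0 : ℝ) 1, deriv (deriv U) r + c / r * deriv U r + g (U r) = 0)
    (h1 : deriv U 1 = 0) :
    ∫ r in (0 : ℝ)..1, r ^ c * (deriv (deriv U) r ^ 2 - g' (U r) * deriv U r ^ 2)
      = -c * ∫ r in (0 : ℝ)..1, r ^ (c - 2) * deriv U r ^ 2 := by
  have hode' : ∀ r ∈ Ioo (0 : ℝ) 1, deriv (deriv (deriv U)) r + c / r * deriv (deriv U) r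
      - c / r ^ 2 * deriv U r + g' (U r) * deriv U r = 0 := fun r hr =>
    deriv_radial_ode_eq_zero hU hg hr.1.ne' (eventually_of_mem (isOpen_Ioo.mem_nhds hr) hode)
  have hU₂ : ContDiff ℝ 1 (deriv (deriv U)) := (hU.deriv' (n := 2)).deriv'
  set V := deriv U
  set W := deriv V
  set T := deriv W
  have hV : Differentiable ℝ V := (hU.deriv' (n := 2)).differentiable (by norm_num)
  have hW : Differentiable ℝ W := hU₂.differentiable one_ne_zero
  have hT : Continuous T := hU₂.continuous_deriv le_rfl
  have hpow : Continuous fun r : ℝ => r ^ c := continuous_rpow_const (by linarith)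
  set F : ℝ → ℝ := fun r => r ^ c * (V r * W r)
  set f : ℝ → ℝ := fun r => c * r ^ (c - 1) * (V r * W r) + r ^ c * (W r ^ 2 + V r * T r)
  set L : ℝ → ℝ := fun r => r ^ c * (W r ^ 2 - g' (U r) * V r ^ 2)
  have hF : ∀ r, HasDerivAt F (f r) r := fun r =>
    ((hasDerivAt_rpow_const (Or.inr hc)).mul ((hV r).hasDerivAt.mul (hW r).hasDerivAt)).congr_deriv
      (by simp only [f, W, T, Pi.mul_apply]; ring)
  have hf : Continuous f := by
    have := continuous_rpow_const (by linarith : 0 ≤ c - 1)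
    have := hV.continuous
    have := hW.continuous
    simp only [f]
    fun_prop
  have hL : Continuous L := by
    have := hU.continuous
    have := hV.continuous
    have := hW.continuous
    simp only [L]
    fun_prop
  -- `r^(c-2)` is singular at `0` when `c < 2`; identifying `c r^(c-2) V²` with the continuous
  -- `f - L` on `(0,1)` makes its integrability unnecessary.
  have hfL : EqOn (fun r => c * (r ^ (c - 2) * V r ^ 2)) (fun r => f r - L r) (Ioo 0 1) := by
    intro r hr
    simp only [f, L, rpow_sub hr.1, rpow_one, rpow_two]
    linear_combination (-(r ^ c * V r)) * hode' r hr
  have hf0 : ∫ r in (0 : ℝ)..1, f r = 0 := by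
    rw [intervalIntegral.integral_eq_sub_of_hasDerivAt (fun r _ => hF r)
      (hf.intervalIntegrable 0 1)]
    simp [F, h1, zero_rpow (by linarith : c ≠ 0)]
  rw [neg_mul, ← intervalIntegral.integral_const_mul,
    intervalIntegral.integral_congr_Ioo_of_le zero_le_one hfL,
    intervalIntegral.integral_sub (hf.intervalIntegrable 0 1) (hL.intervalIntegrable 0 1), hf0]
  ring

end RadialODE

theorem stmt3_general (N : ℕ) (hN : 2 ≤ N) (p mu : ℝ) (hp : 2 < p)
    (U : ℝ → ℝ) (hU : ContDiff ℝ 3 U)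
    (hode : ∀ r ∈ Set.Ioo (0 : ℝ) 1,
      deriv (deriv U) r + ((N : ℝ) - 1) / r * deriv U r + mu ^ 2 * |U r| ^ (p - 2) * U r = 0)
    (h1 : deriv U 1 = 0) :
    ∫ r in (0 : ℝ)..1, r ^ ((N : ℝ) - 1) *
        ((deriv (deriv U) r) ^ 2 - mu ^ 2 * (p - 1) * |U r| ^ (p - 2) * (deriv U r) ^ 2)
      = -((N : ℝ) - 1) * ∫ r in (0 : ℝ)..1, r ^ ((N : ℝ) - 3) * (deriv U r) ^ 2 := by
  have hN' : (1 : ℝ) ≤ N - 1 := by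
    have : (2 : ℝ) ≤ N := by exact_mod_cast hN
    linarith
  have hq : 0 < p - 2 := by linarith
  have hg : ∀ u, HasDerivAt (fun u => mu ^ 2 * |u| ^ (p - 2) * u)
      (mu ^ 2 * (p - 1) * |u| ^ (p - 2)) u := fun u => by
    simpa only [mul_assoc, show p - 2 + 1 = p - 1 by ring]
      using (hasDerivAt_abs_rpow_mul_self hq u).const_mul (mu ^ 2)
  have hg' : Continuous fun u : ℝ => mu ^ 2 * (p - 1) * |u| ^ (p - 2) :=
    continuous_const.mul (continuous_abs.rpow_const fun _ => Or.inr hq.le)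
  rw [show (N : ℝ) - 3 = (N - 1) - 2 by ring]
  exact integral_rpow_mul_sq_deriv_of_radial_ode hN' hU hg hg' hode h1

theorem stmt3 (N : ℕ) (hN : 2 ≤ N) (p mu : ℝ) (hp : 2 < p) (hmu : 0 < mu)
    (U : ℝ → ℝ) (hU : ContDiff ℝ 3 U)
    (hode : ∀ r ∈ Set.Ioo (0 : ℝ) 1,
      deriv (deriv U) r + ((N : ℝ) - 1) / r * deriv U r + mu ^ 2 * |U r| ^ (p - 2) * U r = 0)
    (h0 : deriv U 0 = 0) (h1 : deriv U 1 = 0) :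
    ∫ r in (0 : ℝ)..1, r ^ ((N : ℝ) - 1) *
        ((deriv (deriv U) r) ^ 2 - mu ^ 2 * (p - 1) * |U r| ^ (p - 2) * (deriv U r) ^ 2)
      = -((N : ℝ) - 1) * ∫ r in (0 : ℝ)..1, r ^ ((N : ℝ) - 3) * (deriv U r) ^ 2 :=
  stmt3_general N hN p mu hp U hU hode h1
end

section
/- Let N ≥ 2, p > 2, μ > 0, and let U ∈ C³([0,1]) satisfy U'' + ((N-1)/r)U' + μ²|U|^{p-2}U = 0 on (0,1) with U'(0) = U'(1) = 0 and U not constant. Then the first Dirichlet eigenvalue γ₁ := inf { ∫₀¹ r^{N-1}[ (v')² - μ²(p-1)|U|^{p-2} v² ] dr / ∫₀¹ r^{N-1} v² dr : v ∈ H¹(0,1), v(1) = 0, v ≠ 0 } is strictly negative. -/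
/-!
Test the quadratic form with `v = U'`, which is admissible because `U'(1) = 0`. Using the
equation to express `U'''`, one finds
`(r^{N-1} U' U'')' = r^{N-1} ((U'')² - μ²(p-1)|U|^{p-2} (U')²) + (N-1) r^{N-3} (U')²`.
Integrated over `[0,1]` the left side vanishes since `U'(0) = U'(1) = 0`, so the numerator of the
quotient of `U'` is `-(N-1) ∫ r^{N-3} (U')² < 0`. Since `|U|^{p-2}` is bounded on `[0,1]`, all the
quotients are bounded below, so the infimum is at most this negative quotient.
-/

open Real Set MeasureTheory Filter Topology

lemma hasDerivAt_abs_rpow_sub_two_mul {p : ℝ} (hp : 2 < p) (x : ℝ) :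
    HasDerivAt (fun y : ℝ => |y| ^ (p - 2) * y) ((p - 1) * |x| ^ (p - 2)) x := by
  have hcont : Continuous fun y : ℝ => |y| ^ (p - 2) :=
    continuous_abs.rpow_const fun _ => Or.inr (by linarith)
  refine hasDerivAt_of_hasDerivAt_of_ne' (x := 0) (g := fun y => (p - 1) * |y| ^ (p - 2))
    (fun y hy => ?_) (hcont.mul continuous_id).continuousAt
    (continuous_const.mul hcont).continuousAt x
  have hy' : |y| ≠ 0 := abs_ne_zero.mpr hy
  refine (((hasDerivAt_abs hy).rpow_const (Or.inl hy')).mul (hasDerivAt_id y)).congr_deriv ?_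
  have hsplit : |y| ^ (p - 2) = |y| ^ (p - 2 - 1) * |y| := by
    rw [← rpow_add_one hy']; ring_nf
  rw [hsplit, id, ← self_mul_sign y]
  ring

lemma exists_mem_Ioo_ne_zero_of_continuousOn {f : ℝ → ℝ} {a b : ℝ} (hab : a < b)
    (hf : ContinuousOn f (Icc a b)) (hne : ∃ x ∈ Icc a b, f x ≠ 0) :
    ∃ y ∈ Ioo a b, f y ≠ 0 := by
  by_contra! h
  obtain ⟨x, hx, hfx⟩ := hne
  exact hfx <| EqOn.of_subset_closure (g := 0) h hf continuousOn_const Ioo_subset_Icc_self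
    (closure_Ioo hab.ne).ge hx

lemma integral_rpow_mul_sq_pos {α a b : ℝ} {v : ℝ → ℝ} (hα : 0 ≤ α) (ha : 0 ≤ a)
    (hab : a < b) (hv : ContinuousOn v (Icc a b)) (hne : ∃ x ∈ Icc a b, v x ≠ 0) :
    0 < ∫ r in a..b, r ^ α * v r ^ 2 := by
  obtain ⟨y, hy, hvy⟩ := exists_mem_Ioo_ne_zero_of_continuousOn hab hv hne
  exact intervalIntegral.integral_pos hab ((continuous_rpow_const hα).continuousOn.mul (hv.pow 2))
    (fun r hr => mul_nonneg (rpow_nonneg (ha.trans hr.1.le) _) (sq_nonneg _))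
    ⟨y, Ioo_subset_Icc_self hy, mul_pos (rpow_pos_of_pos (ha.trans_lt hy.1) _) (by positivity)⟩

noncomputable def rayleighQuotient (a b : ℝ) (w V v : ℝ → ℝ) : ℝ :=
  (∫ r in a..b, w r * (deriv v r ^ 2 - V r * v r ^ 2)) / ∫ r in a..b, w r * v r ^ 2

lemma neg_le_rayleighQuotient {a b M : ℝ} {w V v : ℝ → ℝ} (hab : a < b)
    (hw : ContinuousOn w (Icc a b)) (hw0 : ∀ r ∈ Icc a b, 0 ≤ w r)
    (hV : ContinuousOn V (Icc a b)) (hVM : ∀ r ∈ Icc a b, V r ≤ M)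
    (hv : ContDiffOn ℝ 1 v (Icc a b)) (hden : 0 < ∫ r in a..b, w r * v r ^ 2) :
    -M ≤ rayleighQuotient a b w V v := by
  set v' := derivWithin v (Icc a b)
  have hv'c : ContinuousOn v' (Icc a b) :=
    hv.continuousOn_derivWithin (uniqueDiffOn_Icc hab) le_rfl
  have hderiv : EqOn (fun r => w r * (deriv v r ^ 2 - V r * v r ^ 2))
      (fun r => w r * (v' r ^ 2 - V r * v r ^ 2)) (Ioo a b) := fun r hr => by
    simp only [v', derivWithin_of_mem_nhds (Icc_mem_nhds hr.1 hr.2)]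
  have hint : IntervalIntegrable (fun r => w r * (v' r ^ 2 - V r * v r ^ 2)) volume a b :=
    (hw.mul ((hv'c.pow 2).sub (hV.mul (hv.continuousOn.pow 2)))).intervalIntegrable_of_Icc hab.le
  have hmono : ∫ r in a..b, -M * (w r * v r ^ 2) ≤
      ∫ r in a..b, w r * (v' r ^ 2 - V r * v r ^ 2) := by
    refine intervalIntegral.integral_mono_on hab.le
      ((hw.mul (hv.continuousOn.pow 2)).intervalIntegrable_of_Icc hab.le |>.const_mul _) hint
      fun r hr => ?_
    have := mul_le_mul_of_nonneg_left (hVM r hr) (mul_nonneg (hw0 r hr) (sq_nonneg (v r)))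
    nlinarith [mul_nonneg (hw0 r hr) (sq_nonneg (v' r))]
  rw [rayleighQuotient, le_div_iff₀ hden, intervalIntegral.integral_congr_Ioo_of_le hab.le hderiv,
    ← intervalIntegral.integral_const_mul]
  exact hmono

lemma exists_abs_le_mul_of_eq_zero {g : ℝ → ℝ} (hg : ContDiff ℝ 1 g) (hg0 : g 0 = 0) :
    ∃ C, ∀ x ∈ Icc (0 : ℝ) 1, |g x| ≤ C * x := by
  obtain ⟨C, hC⟩ := (isCompact_Icc (a := (0 : ℝ)) (b := 1)).exists_bound_of_continuousOn
    (hg.continuous_deriv le_rfl).continuousOn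
  refine ⟨C, fun x hx => ?_⟩
  simpa [hg0] using norm_image_sub_le_of_norm_deriv_le_segment'
    (fun y _ => (hg.differentiable one_ne_zero y).hasDerivAt.hasDerivWithinAt)
    (fun y hy => hC y (Ico_subset_Icc_self hy)) x hx

lemma intervalIntegrable_rpow_sub_two_mul_sq {α : ℝ} {g : ℝ → ℝ} (hα : 0 ≤ α)
    (hg : ContDiff ℝ 1 g) (hg0 : g 0 = 0) :
    IntervalIntegrable (fun r => r ^ (α - 2) * g r ^ 2) volume 0 1 := by
  -- `g = O(r)` at `0` compensates the singular factor `r ^ (α - 2)`.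
  obtain ⟨C, hC⟩ := exists_abs_le_mul_of_eq_zero hg hg0
  have hcont : ContinuousOn (fun r => r ^ (α - 2) * g r ^ 2) (Ioc 0 1) := fun r hr =>
    ((continuousAt_rpow_const r _ (Or.inl hr.1.ne')).mul
      (hg.continuous.pow 2).continuousAt).continuousWithinAt
  rw [intervalIntegrable_iff_integrableOn_Ioc_of_le zero_le_one]
  refine IntegrableOn.of_bound measure_Ioc_lt_top (hcont.aestronglyMeasurable measurableSet_Ioc)
    (C ^ 2) (ae_restrict_of_forall_mem measurableSet_Ioc fun r hr => ?_)
  have hr0 := hr.1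
  have hg2 : g r ^ 2 ≤ (C * r) ^ 2 := by
    rw [← sq_abs]; exact pow_le_pow_left₀ (abs_nonneg _) (hC r (Ioc_subset_Icc_self hr)) 2
  calc ‖r ^ (α - 2) * g r ^ 2‖ = r ^ (α - 2) * g r ^ 2 := by
        rw [Real.norm_eq_abs, abs_of_nonneg (by positivity)]
    _ ≤ r ^ (α - 2) * (C * r) ^ 2 := by gcongr
    _ = C ^ 2 * r ^ α := by
        rw [rpow_sub hr0, rpow_two]; field_simp
    _ ≤ C ^ 2 := mul_le_of_le_one_right (by positivity) (rpow_le_one hr0.le hr.2 hα)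

section RadialODE

variable {α : ℝ} {f f' U : ℝ → ℝ}

/-- No third derivative of `U` is assumed: the equation exhibits `U''` as a differentiable
function. -/
lemma hasDerivAt_deriv_deriv_of_ode {r : ℝ} (hr : r ≠ 0)
    (hU : DifferentiableAt ℝ U r) (hU' : DifferentiableAt ℝ (deriv U) r)
    (hf : HasDerivAt f (f' (U r)) (U r))
    (hode : ∀ᶠ x in 𝓝 r, deriv (deriv U) x + α / x * deriv U x + f (U x) = 0) :
    HasDerivAt (deriv (deriv U))
      (α / r ^ 2 * deriv U r - α / r * deriv (deriv U) r - f' (U r) * deriv U r) r := by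
  have hrhs := ((((hasDerivAt_inv hr).const_mul α).mul hU'.hasDerivAt).neg).sub
    (hf.comp r hU.hasDerivAt)
  refine (hrhs.congr_of_eventuallyEq ?_).congr_deriv (by ring)
  filter_upwards [hode] with x hx
  simp only [Pi.sub_apply, Pi.neg_apply, Pi.mul_apply, Function.comp_apply, ← div_eq_mul_inv]
  linarith

lemma hasDerivAt_rpow_mul_deriv_mul_deriv_deriv {r : ℝ} (hr : 0 < r)
    (hU : DifferentiableAt ℝ U r) (hU' : DifferentiableAt ℝ (deriv U) r)
    (hf : HasDerivAt f (f' (U r)) (U r))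
    (hode : ∀ᶠ x in 𝓝 r, deriv (deriv U) x + α / x * deriv U x + f (U x) = 0) :
    HasDerivAt (fun x => x ^ α * (deriv U x * deriv (deriv U) x))
      (r ^ α * (deriv (deriv U) r ^ 2 - f' (U r) * deriv U r ^ 2)
        + α * (r ^ (α - 2) * deriv U r ^ 2)) r := by
  have h3 := hasDerivAt_deriv_deriv_of_ode hr.ne' hU hU' hf hode
  refine ((hasDerivAt_rpow_const (Or.inl hr.ne')).mul
    (hU'.hasDerivAt.mul h3)).congr_deriv ?_
  rw [Pi.mul_apply, rpow_sub_one hr.ne', rpow_sub hr, rpow_two]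
  field_simp
  ring

theorem integral_rpow_mul_sq_deriv_deriv_sub_eq (hα : 0 ≤ α) (hU : ContDiff ℝ 2 U)
    (hf : ∀ x, HasDerivAt f (f' x) x) (hf' : Continuous f')
    (hode : ∀ r ∈ Ioo (0 : ℝ) 1, deriv (deriv U) r + α / r * deriv U r + f (U r) = 0)
    (h0 : deriv U 0 = 0) (h1 : deriv U 1 = 0) :
    ∫ r in (0 : ℝ)..1, r ^ α * (deriv (deriv U) r ^ 2 - f' (U r) * deriv U r ^ 2) =
      -(α * ∫ r in (0 : ℝ)..1, r ^ (α - 2) * deriv U r ^ 2) := by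
  have hU' : ContDiff ℝ 1 (deriv U) := hU.deriv'
  have hU'' : Continuous (deriv (deriv U)) := hU'.continuous_deriv le_rfl
  have hw : Continuous fun r : ℝ => r ^ α := continuous_rpow_const hα
  have hH : IntervalIntegrable
      (fun r => r ^ α * (deriv (deriv U) r ^ 2 - f' (U r) * deriv U r ^ 2)) volume 0 1 :=
    (hw.mul ((hU''.pow 2).sub ((hf'.comp hU.continuous).mul
      (hU'.continuous.pow 2)))).intervalIntegrable 0 1
  have hG := intervalIntegrable_rpow_sub_two_mul_sq hα hU' h0
  have hFTC := intervalIntegral.integral_eq_sub_of_hasDerivAt_of_le zero_le_one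
    (hw.mul (hU'.continuous.mul hU'')).continuousOn
    (fun r hr => hasDerivAt_rpow_mul_deriv_mul_deriv_deriv hr.1
      (hU.differentiable two_ne_zero r) (hU'.differentiable one_ne_zero r) (hf (U r))
      (eventually_of_mem (Ioo_mem_nhds hr.1 hr.2) hode))
    (hH.add (hG.const_mul α))
  rw [intervalIntegral.integral_add hH (hG.const_mul α), intervalIntegral.integral_const_mul]
    at hFTC
  simp only [Pi.mul_apply, h0, h1, zero_mul, mul_zero, sub_zero] at hFTC
  linarith

theorem integral_rpow_mul_sq_deriv_deriv_sub_neg (hα : 0 < α) (hU : ContDiff ℝ 2 U)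
    (hf : ∀ x, HasDerivAt f (f' x) x) (hf' : Continuous f')
    (hode : ∀ r ∈ Ioo (0 : ℝ) 1, deriv (deriv U) r + α / r * deriv U r + f (U r) = 0)
    (h0 : deriv U 0 = 0) (h1 : deriv U 1 = 0) (hne : ∃ x ∈ Icc (0 : ℝ) 1, deriv U x ≠ 0) :
    ∫ r in (0 : ℝ)..1, r ^ α * (deriv (deriv U) r ^ 2 - f' (U r) * deriv U r ^ 2) < 0 := by
  have hU' : ContDiff ℝ 1 (deriv U) := hU.deriv'
  rw [integral_rpow_mul_sq_deriv_deriv_sub_eq hα.le hU hf hf' hode h0 h1, neg_lt_zero]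
  refine mul_pos hα ((integral_rpow_mul_sq_pos hα.le le_rfl zero_lt_one
    hU'.continuous.continuousOn hne).trans_le ?_)
  exact intervalIntegral.integral_mono_on_of_le_Ioo zero_le_one
    (((continuous_rpow_const hα.le).mul (hU'.continuous.pow 2)).intervalIntegrable 0 1)
    (intervalIntegrable_rpow_sub_two_mul_sq hα.le hU' h0) fun r hr =>
      mul_le_mul_of_nonneg_right (rpow_le_rpow_of_exponent_ge hr.1 hr.2.le (by linarith))
        (sq_nonneg _)

end RadialODE

lemma exists_mem_Icc_deriv_ne_zero {g : ℝ → ℝ} {a b : ℝ} (hg : Differentiable ℝ g)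
    (hnc : ¬∃ c, ∀ r ∈ Icc a b, g r = c) : ∃ x ∈ Icc a b, deriv g x ≠ 0 := by
  by_contra! h
  refine hnc ⟨g a, constant_of_has_deriv_right_zero hg.continuous.continuousOn fun x hx => ?_⟩
  simpa [h x (Ico_subset_Icc_self hx)] using (hg x).hasDerivAt.hasDerivWithinAt

theorem stmt4_general (N : ℕ) (hN : 2 ≤ N) (p mu : ℝ) (hp : 2 < p)
    (U : ℝ → ℝ) (hU : ContDiff ℝ 3 U)
    (hode : ∀ r ∈ Set.Ioo (0 : ℝ) 1,
      deriv (deriv U) r + ((N : ℝ) - 1) / r * deriv U r + mu ^ 2 * |U r| ^ (p - 2) * U r = 0)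
    (h0 : deriv U 0 = 0) (h1 : deriv U 1 = 0)
    (hnc : ¬ ∃ c : ℝ, ∀ r ∈ Set.Icc (0 : ℝ) 1, U r = c) :
    sInf { R : ℝ | ∃ v : ℝ → ℝ, ContDiffOn ℝ 1 v (Set.Icc 0 1) ∧ v 1 = 0 ∧
        (∃ r ∈ Set.Icc (0 : ℝ) 1, v r ≠ 0) ∧
        R = (∫ r in (0 : ℝ)..1, r ^ ((N : ℝ) - 1) *
              ((deriv v r) ^ 2 - mu ^ 2 * (p - 1) * |U r| ^ (p - 2) * (v r) ^ 2))
          / (∫ r in (0 : ℝ)..1, r ^ ((N : ℝ) - 1) * (v r) ^ 2) } < 0 := by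
  have hα : 0 < (N : ℝ) - 1 := by
    have : (2 : ℝ) ≤ N := by exact_mod_cast hN
    linarith
  have hU2 : ContDiff ℝ 2 U := hU.of_le (by norm_num)
  have hU' : ContDiff ℝ 1 (deriv U) := hU2.deriv'
  have hf (x : ℝ) : HasDerivAt (fun y => mu ^ 2 * |y| ^ (p - 2) * y)
      (mu ^ 2 * (p - 1) * |x| ^ (p - 2)) x := by
    simpa only [mul_assoc] using (hasDerivAt_abs_rpow_sub_two_mul hp x).const_mul (mu ^ 2)
  have hf' : Continuous fun x : ℝ => mu ^ 2 * (p - 1) * |x| ^ (p - 2) :=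
    continuous_const.mul (continuous_abs.rpow_const fun _ => Or.inr (by linarith))
  have hne := exists_mem_Icc_deriv_ne_zero (hU.differentiable (by norm_num)) hnc
  refine csInf_lt_of_lt ?_ ⟨deriv U, hU'.contDiffOn, h1, hne, rfl⟩
    (div_neg_of_neg_of_pos
      (integral_rpow_mul_sq_deriv_deriv_sub_neg hα hU2 hf hf' hode h0 h1 hne)
      (integral_rpow_mul_sq_pos hα.le le_rfl zero_lt_one hU'.continuous.continuousOn hne))
  obtain ⟨M, hM⟩ := ((isCompact_Icc (a := (0 : ℝ)) (b := 1)).image_of_continuousOn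
    (hf'.comp hU.continuous).continuousOn).bddAbove
  refine ⟨-M, ?_⟩
  rintro R ⟨v, hv, -, hv0, rfl⟩
  exact neg_le_rayleighQuotient zero_lt_one (continuous_rpow_const hα.le).continuousOn
    (fun r hr => rpow_nonneg hr.1 _) (hf'.comp hU.continuous).continuousOn
    (fun r hr => hM ⟨r, hr, rfl⟩) hv
    (integral_rpow_mul_sq_pos hα.le le_rfl zero_lt_one hv.continuousOn hv0)

theorem stmt4 (N : ℕ) (hN : 2 ≤ N) (p mu : ℝ) (hp : 2 < p) (hmu : 0 < mu)
    (U : ℝ → ℝ) (hU : ContDiff ℝ 3 U)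
    (hode : ∀ r ∈ Set.Ioo (0 : ℝ) 1,
      deriv (deriv U) r + ((N : ℝ) - 1) / r * deriv U r + mu ^ 2 * |U r| ^ (p - 2) * U r = 0)
    (h0 : deriv U 0 = 0) (h1 : deriv U 1 = 0)
    (hnc : ¬ ∃ c : ℝ, ∀ r ∈ Set.Icc (0 : ℝ) 1, U r = c) :
    sInf { R : ℝ | ∃ v : ℝ → ℝ, ContDiffOn ℝ 1 v (Set.Icc 0 1) ∧ v 1 = 0 ∧
        (∃ r ∈ Set.Icc (0 : ℝ) 1, v r ≠ 0) ∧
        R = (∫ r in (0 : ℝ)..1, r ^ ((N : ℝ) - 1) *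
              ((deriv v r) ^ 2 - mu ^ 2 * (p - 1) * |U r| ^ (p - 2) * (v r) ^ 2))
          / (∫ r in (0 : ℝ)..1, r ^ ((N : ℝ) - 1) * (v r) ^ 2) } < 0 :=
  stmt4_general N hN p mu hp U hU hode h0 h1 hnc
end
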